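/- Let (X, r) be a non-degenerate involutive set-theoretic solution of the Yang–Baxter equation with |X| = m ≥ 2 and let n ≥ 2. For every y ∈ X^n there exist a partition λ ∈ P(n, m) and a λ-element x such that y ∈ O(x). Consequently, X^n = ⋃_{λ ∈ P(n,m)} B(λ). -/

import Mathlib

/-! Set-theoretic solutions of the Yang–Baxter equation.
For `r : X × X → X × X` we write `r (i, j) = (σ i j, τ j i)`, i.e. `σ_i(j) = σ i j` and
`τ_j(i) = τ j i`. -/

variable {X : Type*}

/-- The map `r : X × X → X × X` determined by families `σ`, `τ` via
`r (i, j) = (σ_i(j), τ_j(i))`. -/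
def rmapF (σ τ : X → X → X) : X × X → X × X := fun p => (σ p.1 p.2, τ p.2 p.1)

/-- `r × id` on `X × X × X`. -/
def ridF (r : X × X → X × X) : X × X × X → X × X × X :=
  fun p => ((r (p.1, p.2.1)).1, (r (p.1, p.2.1)).2, p.2.2)

/-- `id × r` on `X × X × X`. -/
def idrF (r : X × X → X × X) : X × X × X → X × X × X := fun p => (p.1, r p.2)

/-- The braid (Yang–Baxter) equation `(r × id) ∘ (id × r) ∘ (r × id) = (id × r) ∘ (r × id) ∘ (id × r)`. -/
def BraidEq (r : X × X → X × X) : Prop :=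
  ridF r ∘ idrF r ∘ ridF r = idrF r ∘ ridF r ∘ idrF r

/-- A non-degenerate involutive set-theoretic solution of the Yang–Baxter equation on `X`:
the maps `σ_i` and `τ_i` are bijective (packaged as equivalences), the induced map
`r (i, j) = (σ_i(j), τ_j(i))` satisfies the braid equation, and `r ∘ r = id`
(which in particular makes `r` bijective). -/
structure NDIS (X : Type*) where
  σ : X → X ≃ X
  τ : X → X ≃ X
  braid : BraidEq (rmapF (fun i => ⇑(σ i)) (fun i => ⇑(τ i)))
  invol : ∀ p : X × X,
    rmapF (fun i => ⇑(σ i)) (fun i => ⇑(τ i))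
      (rmapF (fun i => ⇑(σ i)) (fun i => ⇑(τ i)) p) = p

namespace NDIS

/-- The map `r` of the solution. -/
def r (S : NDIS X) : X × X → X × X := rmapF (fun i => ⇑(S.σ i)) (fun i => ⇑(S.τ i))

/-- The diagonal `D : X → X`, `D(i) = τ_i⁻¹(i)`. -/
def D (S : NDIS X) : X → X := fun i => (S.τ i).symm i

end NDIS
namespace NDIS

/-- One elementary move on words: apply `r` to two adjacent letters. -/
def Step (S : NDIS X) (x y : List X) : Prop :=
  ∃ (u v : List X) (i j : X), x = u ++ i :: j :: v ∧ y = u ++ S.σ i j :: S.τ j i :: v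

/-- The orbit `O(x)` of a word `x` under the equivalence relation generated by the
adjacent `r`-moves (equivalently, the orbit of the induced `S_n`-action on `X^n`). -/
def Orb (S : NDIS X) (x : List X) : Set (List X) := {y | Relation.EqvGen S.Step x y}

/-- `Ψ_k(a) = (D^{k−1}(a), …, D(a), a)`. -/
def Psi (S : NDIS X) (k : ℕ) (a : X) : List X :=
  (List.range k).map fun t => S.D^[k - 1 - t] a

/-- The inverse of the diagonal `D`. -/
noncomputable def Dinv (S : NDIS X) [Nonempty X] : X → X := Function.invFun S.D

/-- `Ψ_{−k}(a) = (a, D^{−1}(a), …, D^{−(k−1)}(a))`. -/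
noncomputable def PsiNeg (S : NDIS X) [Nonempty X] (k : ℕ) (a : X) : List X :=
  (List.range k).map fun t => S.Dinv^[t] a

/-- `σ_x = σ_{a_1} ∘ σ_{a_2} ∘ ⋯ ∘ σ_{a_k}` for a word `x = (a_1, …, a_k)`. -/
def sigmaWord (S : NDIS X) (x : List X) (z : X) : X := x.foldr (fun a w => S.σ a w) z

/-- `τ_x = τ_{a_k} ∘ ⋯ ∘ τ_{a_2} ∘ τ_{a_1}` for a word `x = (a_1, …, a_k)`. -/
def tauWord (S : NDIS X) (x : List X) (z : X) : X := x.foldl (fun w a => S.τ a w) z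

/-- The concatenation `Ψ_{L 0}(a 0) Ψ_{L 1}(a 1) ⋯ Ψ_{L (k-1)}(a (k-1))`. -/
def word (S : NDIS X) {k : ℕ} (L : Fin k → ℕ) (a : Fin k → X) : List X :=
  (List.ofFn fun t => S.Psi (L t) (a t)).flatten

/-- The concatenation `Ψ_{L (i+1)}(a (i+1)) ⋯ Ψ_{L (j-1)}(a (j-1))` of the blocks strictly
between positions `i` and `j` (the empty word when `j = i + 1`). -/
def midword (S : NDIS X) {k : ℕ} (L : Fin k → ℕ) (a : Fin k → X) (i j : Fin k) : List X :=
  (((List.ofFn fun t => S.Psi (L t) (a t)).drop ((i : ℕ) + 1)).take ((j : ℕ) - (i : ℕ) - 1)).flatten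

/-- The family `a` yields a `λ`-element: `a_j ≠ D^{−λ_j}(τ_w(a_i))` for all `i < j`, with
`w = Ψ_{λ_{i+1}}(a_{i+1}) ⋯ Ψ_{λ_{j−1}}(a_{j−1})`. -/
def IsLambdaFamily (S : NDIS X) [Nonempty X] {k : ℕ} (L : Fin k → ℕ) (a : Fin k → X) : Prop :=
  ∀ i j : Fin k, i < j →
    a j ≠ S.Dinv^[L j] (S.tauWord (S.midword L a i j) (a i))

/-- `x` is a `λ`-element for the partition with positive parts `L 0 ≥ L 1 ≥ ⋯ ≥ L (k-1) > 0`. -/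
def IsLambdaWord (S : NDIS X) [Nonempty X] {k : ℕ} (L : Fin k → ℕ) (x : List X) : Prop :=
  ∃ a : Fin k → X, x = S.word L a ∧ S.IsLambdaFamily L a

/-- The bijection `b` of `X^n` applying `r` to the entries in (0-based) positions `j` and
`j + 1` and fixing all other entries. -/
def bmap (S : NDIS X) {n : ℕ} (j : ℕ) (hj : j + 1 < n) (x : Fin n → X) : Fin n → X :=
  fun t =>
    if (t : ℕ) = j then S.σ (x ⟨j, by omega⟩) (x ⟨j + 1, hj⟩)
    else if (t : ℕ) = j + 1 then S.τ (x ⟨j + 1, hj⟩) (x ⟨j, by omega⟩)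
    else x t

/-- One elementary move on `X^n` (as functions `Fin n → X`). -/
def StepF (S : NDIS X) {n : ℕ} (x y : Fin n → X) : Prop :=
  ∃ (j : ℕ) (hj : j + 1 < n), y = S.bmap j hj x

end NDIS

/-- The offset `λ_1 + ⋯ + λ_i` of the `i`-th block (0-based). -/
def blockOffset {k : ℕ} (L : Fin k → ℕ) (i : Fin k) : ℕ :=
  ∑ t ∈ Finset.univ.filter (fun t => t < i), L t

/-- A `(λ_1, …, λ_k)`-shuffle: a permutation strictly increasing on each consecutive block. -/
def IsShuffle {k n : ℕ} (L : Fin k → ℕ) (θ : Equiv.Perm (Fin n)) : Prop :=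
  ∀ (i : Fin k) (p q : Fin n), blockOffset L i ≤ (p : ℕ) → p < q →
    (q : ℕ) < blockOffset L i + L i → θ p < θ q

/-!
Write `y` as the concatenation of the `n` blocks `Ψ₁(yᵢ)` and rewrite the list of blocks inside
the orbit. A block `Ψ_l(b)` can be moved, letter by letter, to the left across any concatenation
of blocks; it arrives as a block `Ψ_l(b')` and the blocks it crosses keep their sizes. If two
blocks `Ψ_{lᵢ}(aᵢ)`, `Ψ_{lⱼ}(aⱼ)` violate the `λ`-condition, moving the second next to the first
gives `Ψ_{lᵢ}(aᵢ) Ψ_{lⱼ}(b') = Ψ_{lᵢ+lⱼ}(b')`, a merge; if instead two adjacent blocks have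
increasing sizes, moving the second across the first swaps them. Merges lower the number of
blocks and swaps the number of inversions, so the process ends at a `λ`-element. It has at most
`|X|` blocks: the letters `τ_w(aᵢ)`, `w` the part of the word after the `i`-th block, are pairwise
distinct precisely by the `λ`-condition.
-/

open Relation

namespace NDIS
variable {X : Type*} (S : NDIS X)

lemma sigma_sigma_tau (a b : X) : S.σ (S.σ a b) (S.τ b a) = a :=
  congrArg Prod.fst (S.invol (a, b))

lemma tau_tau_sigma (a b : X) : S.τ (S.τ b a) (S.σ a b) = b :=
  congrArg Prod.snd (S.invol (a, b))

lemma tau_tau_braid (i j k : X) : S.τ k (S.τ j i) = S.τ (S.τ k j) (S.τ (S.σ j k) i) := by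
  simpa [ridF, idrF, rmapF] using congrArg (·.2.2) (congrFun S.braid (i, j, k))

@[simp] lemma tau_D (a : X) : S.τ a (S.D a) = a := (S.τ a).apply_symm_apply a

lemma tau_sigma_D (a b : X) : S.τ (S.σ a b) (S.D a) = S.D (S.τ b a) := by
  apply (S.τ (S.τ b a)).injective
  rw [tau_D, ← S.tau_tau_braid, tau_D]

lemma tau_D_sigma (a b : X) : S.τ a (S.D (S.σ a b)) = S.D b := by
  simpa only [sigma_sigma_tau, tau_tau_sigma] using S.tau_sigma_D (S.σ a b) (S.τ b a)

/-- The witness is `b = σ_a⁻¹(a)`: involutivity gives `σ_a (τ_b a) = a = σ_a b`, so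
`τ_b a = b`. -/
lemma D_surjective : Function.Surjective S.D := by
  intro a
  set b := (S.σ a).symm a
  have hσ : S.σ a b = a := (S.σ a).apply_symm_apply a
  have hτ : S.τ b a = b := (S.σ a).injective <| calc
    S.σ a (S.τ b a) = S.σ (S.σ a b) (S.τ b a) := by rw [hσ]
    _ = S.σ a b := by rw [sigma_sigma_tau, hσ]
  exact ⟨b, (S.τ b).injective (by rw [tau_D, hτ])⟩

lemma D_iterate_Dinv_iterate [Nonempty X] (l : ℕ) (x : X) : S.D^[l] (S.Dinv^[l] x) = x :=
  (Function.rightInverse_invFun S.D_surjective).iterate l x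

lemma Psi_succ (k : ℕ) (a : X) : S.Psi (k + 1) a = S.D^[k] a :: S.Psi k a := by
  rw [Psi, List.range_succ_eq_map, List.map_cons, List.map_map, Psi]
  congr 2 with t
  simp only [Function.comp_apply]
  congr 1
  omega

@[simp] lemma Psi_zero (a : X) : S.Psi 0 a = [] := rfl

@[simp] lemma Psi_one (a : X) : S.Psi 1 a = [a] := rfl

@[simp] lemma length_Psi (k : ℕ) (a : X) : (S.Psi k a).length = k := by simp [Psi]

lemma Psi_add (j l : ℕ) (b : X) : S.Psi (j + l) b = S.Psi j (S.D^[l] b) ++ S.Psi l b := by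
  induction j with
  | zero => simp
  | succ j ih => rw [Nat.add_right_comm, Psi_succ, Psi_succ, ih, Function.iterate_add_apply,
      List.cons_append]

@[simp] lemma sigmaWord_cons (a : X) (w : List X) (z : X) :
    S.sigmaWord (a :: w) z = S.σ a (S.sigmaWord w z) := rfl

lemma sigmaWord_append (u v : List X) (z : X) :
    S.sigmaWord (u ++ v) z = S.sigmaWord u (S.sigmaWord v z) := by
  simp [sigmaWord, List.foldr_append]

@[simp] lemma tauWord_cons (a : X) (w : List X) (z : X) :
    S.tauWord (a :: w) z = S.tauWord w (S.τ a z) := rfl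

lemma tauWord_append (u v : List X) (z : X) :
    S.tauWord (u ++ v) z = S.tauWord v (S.tauWord u z) := by
  simp [tauWord, List.foldl_append]

lemma tauWord_bijective (w : List X) : Function.Bijective (S.tauWord w) := by
  induction w with
  | nil => exact Function.bijective_id
  | cons a w ih => exact ih.comp (S.τ a).bijective

lemma tauWord_D_sigmaWord (w : List X) (b : X) :
    S.tauWord w (S.D (S.sigmaWord w b)) = S.D b := by
  induction w generalizing b with
  | nil => rfl
  | cons a w ih => rw [sigmaWord_cons, tauWord_cons, tau_D_sigma, ih]

lemma tauWord_Psi_D_iterate (l : ℕ) (c : X) : S.tauWord (S.Psi l c) (S.D^[l] c) = c := by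
  induction l with
  | zero => rfl
  | succ l ih => rw [Psi_succ, tauWord_cons, Function.iterate_succ_apply', tau_D, ih]

lemma tau_sigmaWord_Psi (l : ℕ) (a b : X) :
    S.τ (S.sigmaWord (S.Psi l a) b) (S.D^[l] a) = S.D^[l] (S.τ b a) := by
  induction l generalizing b with
  | zero => rfl
  | succ l ih =>
    rw [Psi_succ, sigmaWord_cons, Function.iterate_succ_apply', Function.iterate_succ_apply',
      tau_sigma_D, ih]

variable {S} in
lemma Step.append_append {x y : List X} (h : S.Step x y) (u v : List X) :
    S.Step (u ++ x ++ v) (u ++ y ++ v) := by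
  obtain ⟨u', v', i, j, rfl, rfl⟩ := h
  exact ⟨u ++ u', v' ++ v, i, j, by simp, by simp⟩

variable {S} in
lemma eqvGen_step_append_append {x y : List X} (h : EqvGen S.Step x y) (u v : List X) :
    EqvGen S.Step (u ++ x ++ v) (u ++ y ++ v) := by
  induction h with
  | rel x y h => exact .rel _ _ (h.append_append u v)
  | refl => exact .refl _
  | symm x y _ ih => exact .symm _ _ ih
  | trans x y z _ _ ih ih' => exact .trans _ _ _ ih ih'

variable {S} in
lemma eqvGen_step_length_eq {x y : List X} (h : EqvGen S.Step x y) : x.length = y.length := by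
  induction h with
  | rel x y h => obtain ⟨u, v, i, j, rfl, rfl⟩ := h; simp
  | refl => rfl
  | symm x y _ ih => exact ih.symm
  | trans x y z _ _ ih ih' => exact ih.trans ih'

/-- What is left of `W` after the letter `c` has moved to the front of `W ++ [c]`. -/
def passLeft : List X → X → List X
  | [], _ => []
  | a :: W, c => S.τ (S.sigmaWord W c) a :: passLeft W c

lemma eqvGen_append_singleton (W : List X) (c : X) :
    EqvGen S.Step (W ++ [c]) (S.sigmaWord W c :: S.passLeft W c) := by
  induction W with
  | nil => exact .refl _
  | cons a W ih =>
    refine .trans _ _ _ (by simpa using eqvGen_step_append_append ih [a] []) (.rel _ _ ?_)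
    exact ⟨[], S.passLeft W c, a, S.sigmaWord W c, rfl, rfl⟩

lemma passLeft_append (U W : List X) (c : X) :
    S.passLeft (U ++ W) c = S.passLeft U (S.sigmaWord W c) ++ S.passLeft W c := by
  induction U with
  | nil => rfl
  | cons a U ih => simp [passLeft, ih, sigmaWord_append]

lemma passLeft_Psi (l : ℕ) (a c : X) : S.passLeft (S.Psi l a) c = S.Psi l (S.τ c a) := by
  induction l with
  | zero => rfl
  | succ l ih => rw [Psi_succ, passLeft, tau_sigmaWord_Psi, ih, Psi_succ]

lemma tauWord_passLeft_sigmaWord (W : List X) (c : X) :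
    S.tauWord (S.passLeft W c) (S.sigmaWord W c) = c := by
  induction W with
  | nil => rfl
  | cons a W ih => rw [passLeft, sigmaWord_cons, tauWord_cons, tau_tau_sigma, ih]

def render (P : List (ℕ × X)) : List X := (P.map fun p => S.Psi p.1 p.2).flatten

@[simp] lemma render_nil : S.render [] = [] := rfl

@[simp] lemma render_cons (p : ℕ × X) (P : List (ℕ × X)) :
    S.render (p :: P) = S.Psi p.1 p.2 ++ S.render P := rfl

@[simp] lemma render_append (P Q : List (ℕ × X)) :
    S.render (P ++ Q) = S.render P ++ S.render Q := by
  simp [render]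

lemma length_render (P : List (ℕ × X)) : (S.render P).length = (P.map Prod.fst).sum := by
  induction P with
  | nil => rfl
  | cons p P ih => simp [ih]

lemma exists_passLeft_render (v : List (ℕ × X)) (c : X) :
    ∃ v' : List (ℕ × X), v'.map Prod.fst = v.map Prod.fst ∧
      S.passLeft (S.render v) c = S.render v' := by
  induction v with
  | nil => exact ⟨[], rfl, rfl⟩
  | cons p v ih =>
    obtain ⟨v', hv', hpass⟩ := ih
    refine ⟨(p.1, S.τ (S.sigmaWord (S.render v) c) p.2) :: v', by simp [hv'], ?_⟩
    rw [render_cons, passLeft_append, passLeft_Psi, hpass, render_cons]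

lemma exists_eqvGen_render_append_Psi (v : List (ℕ × X)) (l : ℕ) (b : X) :
    ∃ (b' : X) (v' : List (ℕ × X)), v'.map Prod.fst = v.map Prod.fst ∧
      S.tauWord (S.render v) (S.D^[l] b') = S.D^[l] b ∧
      EqvGen S.Step (S.render v ++ S.Psi l b) (S.Psi l b' ++ S.render v') := by
  induction l generalizing v with
  | zero =>
    obtain ⟨b', hb'⟩ := (S.tauWord_bijective (S.render v)).2 b
    exact ⟨b', v, rfl, hb', by simpa using EqvGen.refl _⟩
  | succ l ih =>
    obtain ⟨v₁, hv₁, hpass⟩ := S.exists_passLeft_render v (S.D^[l] b)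
    obtain ⟨b', v', hv', hτ, hrel⟩ := ih v₁
    have hhead : S.sigmaWord (S.render v) (S.D^[l] b) = S.D^[l] b' :=
      (S.tauWord_bijective (S.render v₁)).1 <| by rw [hτ, ← hpass, tauWord_passLeft_sigmaWord]
    refine ⟨b', v', hv'.trans hv₁, ?_, ?_⟩
    · rw [Function.iterate_succ_apply', Function.iterate_succ_apply', ← hhead,
        tauWord_D_sigmaWord]
    · have hfront := eqvGen_step_append_append
        (S.eqvGen_append_singleton (S.render v) (S.D^[l] b)) [] (S.Psi l b)
      have hback := eqvGen_step_append_append hrel [S.D^[l] b'] []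
      simp only [List.nil_append, List.append_nil, List.append_assoc, List.cons_append,
        hpass, hhead] at hfront hback
      simpa only [Psi_succ, List.cons_append] using hfront.trans _ _ _ hback

end NDIS

/-- Counts the pairs `i < j` with `l[i] < l[j]`: inversions for the decreasing order. -/
def inversions {α : Type*} [LinearOrder α] : List α → ℕ
  | [] => 0
  | x :: xs => xs.countP (x < ·) + inversions xs

lemma inversions_append_cons_cons_lt {α : Type*} [LinearOrder α] (u w : List α) {x y : α}
    (hxy : x < y) : inversions (u ++ y :: x :: w) < inversions (u ++ x :: y :: w) := by
  induction u with
  | nil =>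
    simp [inversions, hxy, hxy.not_gt]
    omega
  | cons z u ih =>
    have hperm := (List.Perm.swap x y w).append_left u
    simp only [List.cons_append, inversions, hperm.countP_eq]
    omega

lemma List.exists_eq_append_cons_cons_lt_of_not_sortedGE {α β : Type*} [LinearOrder β]
    {f : α → β} {l : List α} (h : ¬ (l.map f).SortedGE) :
    ∃ u a b w, l = u ++ a :: b :: w ∧ f a < f b := by
  rw [List.sortedGE_iff_isChain, List.isChain_map,
    List.isChain_iff_forall_rel_of_append_cons_cons] at h
  push Not at h
  obtain ⟨a, b, u, w, hl, hab⟩ := h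
  exact ⟨u, a, b, w, hl, hab⟩

lemma List.drop_eq_take_append_getElem_cons {α : Type*} {l : List α} {i j : ℕ} (hij : i ≤ j)
    (hj : j < l.length) : l.drop i = (l.drop i).take (j - i) ++ l[j] :: l.drop (j + 1) := by
  conv_lhs => rw [← List.take_append_drop (j - i) (l.drop i)]
  rw [List.drop_drop, Nat.add_sub_cancel' hij, List.drop_eq_getElem_cons hj]

namespace NDIS
variable {X : Type*} (S : NDIS X)

lemma exists_eqvGen_merge (u v w : List (ℕ × X)) (li lj : ℕ) (ai aj : X)
    (h : S.D^[lj] aj = S.tauWord (S.render v) ai) :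
    ∃ (b : X) (v' : List (ℕ × X)), v'.map Prod.fst = v.map Prod.fst ∧
      EqvGen S.Step (S.render (u ++ (li, ai) :: v ++ (lj, aj) :: w))
        (S.render (u ++ (li + lj, b) :: (v' ++ w))) := by
  obtain ⟨b, v', hv', hτ, hrel⟩ := S.exists_eqvGen_render_append_Psi v lj aj
  have hb : S.D^[lj] b = ai := (S.tauWord_bijective _).1 (hτ.trans h)
  refine ⟨b, v', hv', ?_⟩
  simpa [Psi_add, hb] using eqvGen_step_append_append hrel (S.render u ++ S.Psi li ai) (S.render w)

lemma exists_eqvGen_swap (u w : List (ℕ × X)) (la lb : ℕ) (a b : X) :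
    ∃ a' b' : X, EqvGen S.Step (S.render (u ++ (la, a) :: (lb, b) :: w))
      (S.render (u ++ (lb, b') :: (la, a') :: w)) := by
  obtain ⟨b', v', hv', -, hrel⟩ := S.exists_eqvGen_render_append_Psi [(la, a)] lb b
  obtain ⟨⟨_, a'⟩, rfl, rfl⟩ := List.map_eq_singleton_iff.1 hv'
  exact ⟨a', b', by simpa using eqvGen_step_append_append hrel (S.render u) (S.render w)⟩

/-- The condition on a `λ`-element, with `D^{−lⱼ}` moved to the other side. -/
def Unmergeable (P : List (ℕ × X)) : Prop :=
  ∀ u li ai v lj aj w, P = u ++ (li, ai) :: v ++ (lj, aj) :: w →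
    S.D^[lj] aj ≠ S.tauWord (S.render v) ai

theorem exists_sortedGE_unmergeable (P : List (ℕ × X)) (hP : ∀ l ∈ P.map Prod.fst, 0 < l) :
    ∃ Q : List (ℕ × X), (∀ l ∈ Q.map Prod.fst, 0 < l) ∧ (Q.map Prod.fst).SortedGE ∧
      S.Unmergeable Q ∧ EqvGen S.Step (S.render P) (S.render Q) := by
  by_cases hU : S.Unmergeable P
  · by_cases hs : (P.map Prod.fst).SortedGE
    · exact ⟨P, hP, hs, hU, .refl _⟩
    obtain ⟨u, ⟨la, a⟩, ⟨lb, b⟩, w, rfl, hlt⟩ :=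
      List.exists_eq_append_cons_cons_lt_of_not_sortedGE hs
    obtain ⟨a', b', hswap⟩ := S.exists_eqvGen_swap u w la lb a b
    obtain ⟨Q, hQpos, hQs, hQU, hQ⟩ :=
      exists_sortedGE_unmergeable (u ++ (lb, b') :: (la, a') :: w) fun l hl =>
        hP l (by
          simp only [List.map_append, List.map_cons, List.mem_append, List.mem_cons] at hl ⊢
          tauto)
    exact ⟨Q, hQpos, hQs, hQU, hswap.trans _ _ _ hQ⟩
  · simp only [Unmergeable, not_forall, not_not] at hU
    obtain ⟨u, li, ai, v, lj, aj, w, rfl, h⟩ := hU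
    obtain ⟨b, v', hv', hmerge⟩ := S.exists_eqvGen_merge u v w li lj ai aj h
    obtain ⟨Q, hQpos, hQs, hQU, hQ⟩ :=
      exists_sortedGE_unmergeable (u ++ (li + lj, b) :: (v' ++ w)) fun l hl => by
        simp only [List.map_append, List.map_cons, hv', List.mem_append, List.mem_cons] at hl
        obtain hl | rfl | hl | hl := hl
        · exact hP l (by simp [hl])
        · exact Nat.add_pos_left (hP li (by simp)) lj
        all_goals exact hP l (by simp [hl])
    exact ⟨Q, hQpos, hQs, hQU, hmerge.trans _ _ _ hQ⟩
termination_by (P.length, inversions (P.map Prod.fst))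
decreasing_by
  all_goals subst_vars
  · exact Prod.Lex.right' _ (by simp) (by simpa using inversions_append_cons_cons_lt _ _ hlt)
  · have := congrArg List.length hv'
    simp only [List.length_map] at this
    exact Prod.Lex.left _ _ (by simp [this])

end NDIS

namespace NDIS
variable {X : Type*} {S : NDIS X}

lemma Unmergeable.iterate_D_getElem_ne {Q : List (ℕ × X)} (hQ : S.Unmergeable Q)
    {i j : Fin Q.length} (hij : i < j) :
    S.D^[Q[j].1] Q[j].2 ≠ S.tauWord (S.render ((Q.drop (i + 1)).take (j - i - 1))) Q[i].2 := by
  refine hQ (Q.take i) Q[i].1 Q[i].2 _ Q[j].1 Q[j].2 (Q.drop (j + 1)) ?_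
  conv_lhs => rw [← List.take_append_drop i Q, List.drop_eq_getElem_cons i.isLt,
    List.drop_eq_take_append_getElem_cons (show (i : ℕ) + 1 ≤ j from hij) j.isLt]
  simp only [Nat.sub_sub, Fin.getElem_fin, List.cons_append, List.append_assoc]

lemma Unmergeable.length_le_card [Fintype X] {Q : List (ℕ × X)} (hQ : S.Unmergeable Q) :
    Q.length ≤ Fintype.card X := by
  let f (i : Fin Q.length) : X := S.tauWord (S.render (Q.drop (i + 1))) Q[i].2
  have hf : f.Injective := .of_lt_imp_ne fun i j hij heq => hQ.iterate_D_getElem_ne hij <| by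
    simp only [f] at heq
    rw [List.drop_eq_take_append_getElem_cons (show (i : ℕ) + 1 ≤ j from hij) j.isLt,
      render_append, render_cons, tauWord_append, tauWord_append] at heq
    have := (S.tauWord_bijective _).1 heq
    rw [← S.tauWord_Psi_D_iterate Q[j].1 Q[j].2] at this
    rw [Nat.sub_sub]
    exact ((S.tauWord_bijective _).1 this).symm
  simpa using Fintype.card_le_of_injective f hf

lemma Unmergeable.isLambdaWord [Nonempty X] {Q : List (ℕ × X)} (hQ : S.Unmergeable Q) :
    S.IsLambdaWord (fun t : Fin Q.length => Q[t].1) (S.render Q) := by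
  refine ⟨fun t => Q[t].2, ?_, fun i j hij heq => hQ.iterate_D_getElem_ne hij ?_⟩
  · simp only [word, render, Fin.getElem_fin,
      List.ofFn_getElem_eq_map Q fun p : ℕ × X => S.Psi p.1 p.2]
  simp only [Fin.getElem_fin] at heq ⊢
  rw [heq, D_iterate_Dinv_iterate, midword]
  simp only [List.ofFn_getElem_eq_map Q fun p : ℕ × X => S.Psi p.1 p.2, render,
    List.map_drop, List.map_take]

end NDIS

theorem every_word_in_some_B_lambda_general {X : Type*} [Fintype X] [Nonempty X]
    (S : NDIS X) (n : ℕ)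
    (y : List X) (hy : y.length = n) :
    ∃ (k : ℕ) (L : Fin k → ℕ),
      (∀ t, 0 < L t) ∧ Antitone L ∧ (∑ t, L t = n) ∧ k ≤ Fintype.card X ∧
      ∃ x : List X, S.IsLambdaWord L x ∧ y ∈ S.Orb x := by
  obtain ⟨Q, hpos, hsorted, hQ, hrel⟩ := S.exists_sortedGE_unmergeable (y.map (1, ·)) (by simp)
  have hrender : S.render (y.map (1, ·)) = y := by
    simp [NDIS.render, Function.comp_def, ← List.flatMap_def]
  rw [hrender] at hrel
  have hL : List.ofFn (fun t : Fin Q.length => Q[t].1) = Q.map Prod.fst := by simp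
  refine ⟨Q.length, fun t => Q[t].1, fun t => hpos _ (List.mem_map_of_mem (List.getElem_mem _)),
    ?_, ?_, hQ.length_le_card, S.render Q, hQ.isLambdaWord, .symm _ _ hrel⟩
  · rwa [← List.sortedGE_ofFn_iff, hL]
  · rw [← List.sum_ofFn, hL, ← S.length_render, ← NDIS.eqvGen_step_length_eq hrel, hy]

/-- Let `(X, r)` be a non-degenerate involutive solution with `|X| = m ≥ 2`
and `n ≥ 2`. Every `y ∈ X^n` lies in the orbit `O(x)` of some `λ`-element `x` for some
partition `λ ∈ P(n, m)` (given by its positive parts `L`); consequently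
`X^n = ⋃_{λ ∈ P(n,m)} B(λ)`. -/
theorem every_word_in_some_B_lambda {X : Type*} [Fintype X] [Nonempty X]
    (S : NDIS X) (hm : 2 ≤ Fintype.card X) (n : ℕ) (hn : 2 ≤ n)
    (y : List X) (hy : y.length = n) :
    ∃ (k : ℕ) (L : Fin k → ℕ),
      (∀ t, 0 < L t) ∧ Antitone L ∧ (∑ t, L t = n) ∧ k ≤ Fintype.card X ∧
      ∃ x : List X, S.IsLambdaWord L x ∧ y ∈ S.Orb x :=
  every_word_in_some_B_lambda_general S n y hy
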